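/- arXiv:2509.05503 — 2 statements merged into one kernel-verified Lean document; each statement's English description precedes it below -/
import Mathlib

section
/- Let S and A be finite sets, let f : S → S → A → ℝ (transition kernel), r : S → A → ℝ (reward), μ : S → ℝ (initial distribution), and 0 < β < 1. Suppose d : S → ℝ and π : S → A → ℝ satisfy: d s ≥ 0 for all s; π a s ≥ 0 and ∑_{a∈A} π s a = 1 for all s; and the flow conservation d s = μ s + β * ∑_{s'∈S} ∑_{a'∈A} f s s' a' * π s' a' * d s' for all s ∈ S. Define ν : S → A → ℝ by ν s a = d s * π s a. Then ν s a ≥ 0 for all s, a; ν satisfies ∑_{a∈A} ν s a = μ s + β * ∑_{s'∈S} ∑_{a'∈A} f s s' a' * ν s' a' for all s ∈ S; and ∑_{s∈S} ∑_{a∈A} ν s a * r s a = ∑_{s∈S} d s * ∑_{a∈A} π s a * r s a. -/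
/-- One direction of the equivalence between the bilinear MDP formulation and
the dual LP: a feasible pair `(d, π)` of the bilinear program yields a
feasible state-action occupancy measure `ν s a = d s * π s a` for the dual
linear program, with the same objective value. -/
theorem stmt_9 {S A : Type*} [Fintype S] [Fintype A]
    (f : S → S → A → ℝ) (r : S → A → ℝ) (μ : S → ℝ)
    (β : ℝ) (hβ : 0 < β) (hβ1 : β < 1)
    (d : S → ℝ) (π : S → A → ℝ)
    (hd : ∀ s, 0 ≤ d s)
    (hπ : ∀ s a, 0 ≤ π s a)
    (hπsum : ∀ s, ∑ a, π s a = 1)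
    (hflow : ∀ s, d s = μ s + β * ∑ s', ∑ a', f s s' a' * π s' a' * d s')
    (ν : S → A → ℝ) (hν : ∀ s a, ν s a = d s * π s a) :
    (∀ s a, 0 ≤ ν s a) ∧
    (∀ s, ∑ a, ν s a = μ s + β * ∑ s', ∑ a', f s s' a' * ν s' a') ∧
    (∑ s, ∑ a, ν s a * r s a = ∑ s, d s * ∑ a, π s a * r s a) := by
  refine ⟨fun s a => by rw [hν]; exact mul_nonneg (hd s) (hπ s a), fun s => ?_, ?_⟩
  · have h1 : ∑ a, ν s a = d s := by
      simp only [hν, ← Finset.mul_sum, hπsum, mul_one]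
    rw [h1, hflow s]
    congr 1; congr 1
    apply Finset.sum_congr rfl; intro s' _
    apply Finset.sum_congr rfl; intro a' _
    rw [hν]; ring
  · simp only [hν, Finset.mul_sum]
    apply Finset.sum_congr rfl; intro s _
    apply Finset.sum_congr rfl; intro a _
    ring
end

section
/- Let S and A be finite nonempty sets, let f : S → S → A → ℝ, r : S → A → ℝ, μ : S → ℝ, and 0 < β < 1. Suppose ν : S → A → ℝ satisfies ν s a ≥ 0 for all s, a, and ∑_{a∈A} ν s a = μ s + β * ∑_{s'∈S} ∑_{a'∈A} f s s' a' * ν s' a' for all s ∈ S. Define d : S → ℝ by d s = ∑_{a∈A} ν s a, and define π : S → A → ℝ by π s a = ν s a / d s when d s > 0 and π s a = 1 / |A| when d s = 0. Then d s ≥ 0 for all s; π s a ≥ 0 and ∑_{a∈A} π s a = 1 for all s; d s = μ s + β * ∑_{s'∈S} ∑_{a'∈A} f s s' a' * π s' a' * d s' for all s ∈ S; and ∑_{s∈S} d s * ∑_{a∈A} π s a * r s a = ∑_{s∈S} ∑_{a∈A} ν s a * r s a. -/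
/-- Converse direction of the equivalence between the dual LP for discounted
MDPs and the bilinear formulation: from any feasible occupancy measure `ν`
one recovers a feasible pair `(d, π)` of the bilinear program with the same
objective value, where `d` is the action-marginal of `ν` and `π` normalizes
`ν` (uniform where `d s = 0`). -/
theorem stmt_10 {S A : Type*} [Fintype S] [Fintype A] [Nonempty S] [Nonempty A]
    (f : S → S → A → ℝ) (r : S → A → ℝ) (μ : S → ℝ)
    (β : ℝ) (hβ : 0 < β) (hβ1 : β < 1)
    (ν : S → A → ℝ)
    (hν : ∀ s a, 0 ≤ ν s a)
    (hνflow : ∀ s, ∑ a, ν s a = μ s + β * ∑ s', ∑ a', f s s' a' * ν s' a')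
    (d : S → ℝ) (hd : ∀ s, d s = ∑ a, ν s a)
    (π : S → A → ℝ)
    (hπdef : ∀ s a, π s a =
      if 0 < d s then ν s a / d s else 1 / (Fintype.card A : ℝ)) :
    (∀ s, 0 ≤ d s) ∧
    (∀ s a, 0 ≤ π s a) ∧
    (∀ s, ∑ a, π s a = 1) ∧
    (∀ s, d s = μ s + β * ∑ s', ∑ a', f s s' a' * π s' a' * d s') ∧
    (∑ s, d s * ∑ a, π s a * r s a = ∑ s, ∑ a, ν s a * r s a) := by
  have hd0 : ∀ s, 0 ≤ d s := fun s => by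
    rw [hd]; exact Finset.sum_nonneg fun a _ => hν s a
  have key : ∀ s a, π s a * d s = ν s a := by
    intro s a
    rw [hπdef]
    by_cases h : 0 < d s
    · rw [if_pos h, div_mul_cancel₀ _ (ne_of_gt h)]
    · have hz : d s = 0 := le_antisymm (not_lt.1 h) (hd0 s)
      have : ν s a = 0 := by
        have := (Finset.sum_eq_zero_iff_of_nonneg (fun a _ => hν s a)).1
          ((hd s).symm.trans hz) a (Finset.mem_univ a)
        exact this
      rw [hz, mul_zero, this]
  have hπ0 : ∀ s a, 0 ≤ π s a := by
    intro s a
    rw [hπdef]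
    by_cases h : 0 < d s
    · rw [if_pos h]; exact div_nonneg (hν s a) (le_of_lt h)
    · rw [if_neg h]
      positivity
  have hπ1 : ∀ s, ∑ a, π s a = 1 := by
    intro s
    by_cases h : 0 < d s
    · have : ∑ a, π s a = (∑ a, ν s a) / d s := by
        rw [Finset.sum_div]
        exact Finset.sum_congr rfl fun a _ => by rw [hπdef, if_pos h]
      rw [this, ← hd, div_self (ne_of_gt h)]
    · have hc : (Fintype.card A : ℝ) ≠ 0 := by
        exact_mod_cast Fintype.card_ne_zero
      simp only [hπdef, if_neg h, Finset.sum_const, nsmul_eq_mul]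
      field_simp
      rw [Finset.card_univ]
  refine ⟨hd0, hπ0, hπ1, fun s => ?_, ?_⟩
  · rw [hd, hνflow]
    congr 1
    congr 1
    refine Finset.sum_congr rfl fun s' _ => Finset.sum_congr rfl fun a' _ => ?_
    rw [mul_assoc, key]
  · refine Finset.sum_congr rfl fun s _ => ?_
    rw [Finset.mul_sum]
    refine Finset.sum_congr rfl fun a _ => ?_
    rw [← key s a]; ring
end
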